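/- arXiv:2010.06720 — 4 statements merged into one kernel-verified Lean document; each statement's English description precedes it below -/
import Mathlib

section
/- Let V be a finite-dimensional real vector space with a nondegenerate symmetric bilinear form κ, and let M : N → M(N) be a smooth map from an open cone N ⊂ V such that M(λN) = (1/λ)M(N) for all λ > 0 and such that along every smooth curve ν(t) in N, κ(dM/dt, dν/dt) ≤ 0 with equality iff dν/dt = 0 (here M is evaluated along ν). Fix 0 ≠ N' ∈ V. Then the set σ'_0 = {N ∈ N : κ(M(N), N') = 0} is contained in the closure of the set σ'_+ = {N ∈ N : κ(M(N), N') > 0}. -/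
/-- Let `V` be a finite-dimensional real vector space with a nondegenerate
symmetric bilinear form `κ`, and `M : 𝒩 → V` a smooth map on an open cone `𝒩 ⊆ V` such that
`M (λ • N) = λ⁻¹ • M N` and along every smooth curve `ν` in `𝒩` one has
`κ (d(M ∘ ν)/dt) (dν/dt) ≤ 0` with equality iff `dν/dt = 0`.  Fix `N' ≠ 0`.  Then
`{N ∈ 𝒩 | κ (M N) N' = 0}` is contained in the closure of `{N ∈ 𝒩 | 0 < κ (M N) N'}`. -/
theorem stmt0
    (V : Type*) [NormedAddCommGroup V] [NormedSpace ℝ V] [FiniteDimensional ℝ V]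
    (κ : LinearMap.BilinForm ℝ V)
    (hsymm : ∀ x y, κ x y = κ y x)
    (hnondeg : ∀ x, (∀ y, κ x y = 0) → x = 0)
    (𝒩 : Set V) (hopen : IsOpen 𝒩)
    (hcone : ∀ (lam : ℝ), 0 < lam → ∀ N ∈ 𝒩, lam • N ∈ 𝒩)
    (M : V → V) (hsmooth : ContDiffOn ℝ (⊤ : ℕ∞) M 𝒩)
    (hhom : ∀ (lam : ℝ), 0 < lam → ∀ N ∈ 𝒩, M (lam • N) = lam⁻¹ • M N)
    (hmono : ∀ ν : ℝ → V, ContDiff ℝ (⊤ : ℕ∞) ν → (∀ t, ν t ∈ 𝒩) →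
      ∀ t : ℝ, κ (deriv (M ∘ ν) t) (deriv ν t) ≤ 0 ∧
        (κ (deriv (M ∘ ν) t) (deriv ν t) = 0 ↔ deriv ν t = 0))
    (N' : V) (hN' : N' ≠ 0) :
    {N | N ∈ 𝒩 ∧ κ (M N) N' = 0} ⊆ closure {N | N ∈ 𝒩 ∧ 0 < κ (M N) N'} := by
  intro N hN
  obtain ⟨hN𝒩, hNzero⟩ := hN
  have hN'pos : (0:ℝ) < ‖N'‖ := norm_pos_iff.mpr hN'
  obtain ⟨r, hrpos, hball⟩ := Metric.isOpen_iff.mp hopen N hN𝒩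
  set c : ℝ := r / (4 * ‖N'‖) with hc
  have hcpos : 0 < c := div_pos hrpos (by positivity)
  set ν : ℝ → V := fun t => N + (c * Real.arctan t) • N' with hν
  have hν𝒩 : ∀ t, ν t ∈ 𝒩 := by
    intro t
    apply hball
    have habs : |Real.arctan t| < 2 := by
      rw [abs_lt]
      constructor
      · have := Real.neg_pi_div_two_lt_arctan t
        nlinarith [Real.pi_lt_d2]
      · have := Real.arctan_lt_pi_div_two t
        nlinarith [Real.pi_lt_d2]
    have : dist (ν t) N = |c * Real.arctan t| * ‖N'‖ := by
      simp [ν, dist_eq_norm, norm_smul, Real.norm_eq_abs, abs_mul]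
    rw [Metric.mem_ball, this, abs_mul, abs_of_pos hcpos]
    calc c * |Real.arctan t| * ‖N'‖ < c * 2 * ‖N'‖ := by
          apply mul_lt_mul_of_pos_right _ hN'pos
          exact mul_lt_mul_of_pos_left habs hcpos
      _ = r / 2 := by field_simp [hc]; rw [hc]; field_simp; norm_num
      _ < r := by linarith
  have hνsmooth : ContDiff ℝ (⊤ : ℕ∞) ν :=
    contDiff_const.add (((contDiff_const.mul Real.contDiff_arctan).smul contDiff_const))
  have hνderiv : ∀ t, HasDerivAt ν ((c * (1 / (1 + t ^ 2))) • N') t := by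
    intro t
    exact (((Real.hasDerivAt_arctan t).const_mul c).smul_const N').const_add N
  have hMν : ContDiff ℝ (⊤ : ℕ∞) (M ∘ ν) := hsmooth.comp_contDiff hνsmooth hν𝒩
  have hMνderiv : ∀ t, HasDerivAt (M ∘ ν) (deriv (M ∘ ν) t) t :=
    fun t => (hMν.differentiable (by simp) t).hasDerivAt
  -- the key function
  set f : ℝ → ℝ := fun t => κ (M (ν t)) N' with hf
  set L : V →L[ℝ] ℝ := LinearMap.toContinuousLinearMap (κ.flip N') with hL
  have hfderiv : ∀ t, HasDerivAt f (κ (deriv (M ∘ ν) t) N') t := by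
    intro t
    have : HasDerivAt (L ∘ (M ∘ ν)) (L (deriv (M ∘ ν) t)) t :=
      L.hasFDerivAt.comp_hasDerivAt t (hMνderiv t)
    exact this
  have hfneg : ∀ t, deriv f t < 0 := by
    intro t
    have hderivν : deriv ν t = (c * (1 / (1 + t ^ 2))) • N' := (hνderiv t).deriv
    have hfac : 0 < c * (1 / (1 + t ^ 2)) := by positivity
    have hne : deriv ν t ≠ 0 := by
      rw [hderivν]
      exact smul_ne_zero (ne_of_gt hfac) hN'
    obtain ⟨hle, hiff⟩ := hmono ν hνsmooth hν𝒩 t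
    have hlt : κ (deriv (M ∘ ν) t) (deriv ν t) < 0 :=
      lt_of_le_of_ne hle (fun h => hne (hiff.mp h))
    rw [hderivν, map_smul, smul_eq_mul] at hlt
    have : κ (deriv (M ∘ ν) t) N' < 0 := by
      by_contra h
      push_neg at h
      nlinarith
    rw [(hfderiv t).deriv]
    exact this
  have hanti : StrictAnti f := strictAnti_of_deriv_neg hfneg
  have hf0 : f 0 = 0 := by
    have : ν 0 = N := by simp [ν]
    simp [hf, this, hNzero]
  -- now take the limit along t → 0⁻
  have hνtendsto : Filter.Tendsto ν (nhdsWithin 0 (Set.Iio 0)) (nhds N) := by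
    have : Filter.Tendsto ν (nhds 0) (nhds (ν 0)) :=
      (hνsmooth.continuous.tendsto 0)
    have hν0 : ν 0 = N := by simp [ν]
    rw [hν0] at this
    exact this.mono_left nhdsWithin_le_nhds
  refine mem_closure_of_tendsto hνtendsto ?_
  filter_upwards [self_mem_nhdsWithin] with t ht
  refine ⟨hν𝒩 t, ?_⟩
  have : f 0 < f t := hanti ht
  rw [hf0] at this
  exact this
end

section
/- Let g = ⊕ g^{p,q} be a bigraded complex Lie algebra with bracket-compatible bigrading, κ an invariant nondegenerate symmetric bilinear form with κ(g^{p,q}, g^{r,s}) = 0 unless (p,q)+(r,s)=(0,0). Let N ∈ g^{-1,-1} and suppose {M, Y, N} is an sl2-triple with M ∈ g^{1,1}, and suppose that for all u in c^{-1,0} (the centralizer of N intersected with g^{-1,0}) the Hermitian form i·κ(ad_M u, ad_N ad_M ū) is positive for u ≠ 0 (polarization condition) with NMu = u for such u. Then the (1,1)-form −ω_M defined by −ω_M(u, ū) = i·κ(M, [u, ū]) is positive definite on c^{-1,0}. -/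
namespace LinearMap.BilinForm

variable {R L : Type*} [CommRing R] [LieRing L] [Module R L]

theorem apply_lie_eq_apply_lie_lie_lie_of_lie_lie_eq_self (κ : LinearMap.BilinForm R L)
    (hsymm : ∀ x y, κ x y = κ y x) (hinv : ∀ x y z : L, κ ⁅x, y⁆ z = κ x ⁅y, z⁆)
    {M N u : L} (hu : ⁅N, ⁅M, u⁆⁆ = u) (v : L) :
    κ M ⁅u, v⁆ = κ ⁅M, u⁆ ⁅N, ⁅M, v⁆⁆ :=
  calc κ M ⁅u, v⁆ = -κ M ⁅v, u⁆ := by rw [← lie_skew u v, map_neg]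
    _ = -κ ⁅M, v⁆ ⁅N, ⁅M, u⁆⁆ := by rw [← hinv, hu]
    _ = κ ⁅N, ⁅M, v⁆⁆ ⁅M, u⁆ := by rw [← hinv, ← lie_skew N, map_neg, LinearMap.neg_apply]
    _ = κ ⁅M, u⁆ ⁅N, ⁅M, v⁆⁆ := hsymm _ _

end LinearMap.BilinForm

open Complex in
theorem stmt8_general
    (L : Type*) [LieRing L] [LieAlgebra ℂ L]
    (κ : LinearMap.BilinForm ℂ L)
    (hsymm : ∀ x y, κ x y = κ y x)
    (hinv : ∀ x y z : L, κ ⁅x, y⁆ z = κ x ⁅y, z⁆)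
    (conj : L → L)
    (M N : L)
    (C : Set L)
    (hNMu : ∀ u ∈ C, ⁅N, ⁅M, u⁆⁆ = u)
    (hpol : ∀ u ∈ C, u ≠ 0 →
      0 < (I * κ ⁅M, u⁆ ⁅N, ⁅M, conj u⁆⁆).re ∧ (I * κ ⁅M, u⁆ ⁅N, ⁅M, conj u⁆⁆).im = 0) :
    ∀ u ∈ C, u ≠ 0 →
      0 < (I * κ M ⁅u, conj u⁆).re ∧ (I * κ M ⁅u, conj u⁆).im = 0 := by
  intro u hu hne
  rw [LinearMap.BilinForm.apply_lie_eq_apply_lie_lie_lie_of_lie_lie_eq_self κ hsymm hinv (hNMu u hu)]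
  exact hpol u hu hne

open Complex in
/-- In a bigraded complex Lie algebra with invariant nondegenerate symmetric
form `κ` (orthogonal with respect to the bigrading), given an `sl₂`-triple `{M, Y, N}` with
`N ∈ g^{-1,-1}`, `M ∈ g^{1,1}`, such that `N·M·u = u` on `c^{-1,0}` (the centralizer of `N`
intersected with `g^{-1,0}`) and the Hermitian form `i·κ(ad_M u, ad_N ad_M ū)` is positive
on `c^{-1,0} \ {0}`, the form `-ω_M` with `-ω_M(u,ū) = i·κ(M,[u,ū])` is positive definite
on `c^{-1,0}`. -/
theorem stmt8
    (L : Type*) [LieRing L] [LieAlgebra ℂ L]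
    (g : ℤ → ℤ → Submodule ℂ L)
    (hinternal : DirectSum.IsInternal (fun pq : ℤ × ℤ => g pq.1 pq.2))
    (hbracket : ∀ p q r s : ℤ, ∀ x ∈ g p q, ∀ y ∈ g r s, ⁅x, y⁆ ∈ g (p + r) (q + s))
    (κ : LinearMap.BilinForm ℂ L)
    (hsymm : ∀ x y, κ x y = κ y x)
    (hinv : ∀ x y z : L, κ ⁅x, y⁆ z = κ x ⁅y, z⁆)
    (horth : ∀ p q r s : ℤ, (p + r, q + s) ≠ (0, 0) →
      ∀ x ∈ g p q, ∀ y ∈ g r s, κ x y = 0)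
    (hnondeg : ∀ x : L, (∀ y : L, κ x y = 0) → x = 0)
    (conj : L → L)
    (hconj_add : ∀ x y : L, conj (x + y) = conj x + conj y)
    (hconj_smul : ∀ (z : ℂ) (x : L), conj (z • x) = (starRingEnd ℂ z) • conj x)
    (hconj_gr : ∀ p q : ℤ, ∀ x ∈ g p q, conj x ∈ g q p)
    (M Y N : L)
    (hN : N ∈ g (-1) (-1)) (hM : M ∈ g 1 1)
    (hMN : ⁅M, N⁆ = Y) (hYM : ⁅Y, M⁆ = (2 : ℂ) • M) (hYN : ⁅Y, N⁆ = -((2 : ℂ) • N))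
    (C : Set L)
    (hC : C = {u | ⁅N, u⁆ = 0} ∩ (g (-1) 0 : Set L))
    (hNMu : ∀ u ∈ C, ⁅N, ⁅M, u⁆⁆ = u)
    (hpol : ∀ u ∈ C, u ≠ 0 →
      0 < (I * κ ⁅M, u⁆ ⁅N, ⁅M, conj u⁆⁆).re ∧ (I * κ ⁅M, u⁆ ⁅N, ⁅M, conj u⁆⁆).im = 0) :
    ∀ u ∈ C, u ≠ 0 →
      0 < (I * κ M ⁅u, conj u⁆).re ∧ (I * κ M ⁅u, conj u⁆).im = 0 :=
  stmt8_general L κ hsymm hinv conj M N C hNMu hpol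
end

section
/- Let γ₁ = α₁β₁ and γ₂ = α₂β₂ be elements of a unipotent group with logarithms c_i = log γ_i, a_i = log α_i ∈ ⊕_{p<0} g^{p,q}, b_i = log β_i ∈ f ∩ m⁻¹, all inside a bigraded nilpotent Lie algebra where brackets of elements of total bidegree summing below (−2,−2) vanish. Writing x^{p,q} for the g^{p,q}-component, if γ = γ₁γ₂ then: a^{-1,0} = a₁^{-1,0} + a₂^{-1,0}; b^{0,-1} = b₁^{0,-1} + b₂^{0,-1}; c^{-1,-1} = c₁^{-1,-1} + c₂^{-1,-1} + ½[a₁^{-1,0}, b₂^{0,-1}] + ½[b₁^{0,-1}, a₂^{-1,0}]; and a^{-1,-1} = a₁^{-1,-1} + a₂^{-1,-1} + [b₁^{0,-1}, a₂^{-1,0}]. -/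
/-!
Conjugation turns `exp c = exp a * exp b` into `exp (ad c) = exp (ad a) ∘ exp (ad b)`, and unlike
matrix products, brackets respect the bigrading. Since `ad` of an element of `m⁻¹` lowers the total
weight `p + q` by at least one, expanding both sides to second order and comparing the components
one and two weights below a homogeneous `v` yields the first two terms of the
Baker–Campbell–Hausdorff formula, up to an element commuting with every `v`. A nilpotent matrix
commuting with all matrices is zero, so these components of `c` are exactly those of the BCH
series. The stated formulas follow by applying this to each factorization `γ = αβ` and to
`γ = γ₁γ₂`, using that `b` has no `(-1, 0)` or `(-1, -1)` component and `a` no `(0, -1)` component.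
-/

section NilpotentExp

open NormedSpace

attribute [local instance 100] LieRing.ofAssociativeRing

variable {A : Type*} [Ring A] [Algebra ℚ A]

theorem NormedSpace.exp_eq_isNilpotent_exp [TopologicalSpace A] [IsTopologicalRing A]
    [T2Space A] {x : A} (hx : IsNilpotent x) : exp x = IsNilpotent.exp x := by
  obtain ⟨k, hk⟩ := hx
  rw [exp_eq_tsum_rat, IsNilpotent.exp_eq_sum hk]
  exact tsum_eq_sum fun i hi => by
    rw [pow_eq_zero_of_le (by simpa using hi) hk, smul_zero]

theorem IsNilpotent.exp_mulLeft {a : A} (ha : IsNilpotent a) :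
    IsNilpotent.exp (LinearMap.mulLeft ℚ a) = LinearMap.mulLeft ℚ (IsNilpotent.exp a) :=
  (ha.map_exp (Algebra.lmul ℚ A)).symm

theorem IsNilpotent.exp_mulRight {a : A} (ha : IsNilpotent a) :
    IsNilpotent.exp (LinearMap.mulRight ℚ a) = LinearMap.mulRight ℚ (IsNilpotent.exp a) := by
  obtain ⟨k, hk⟩ := ha
  have hk' : LinearMap.mulRight ℚ a ^ k = 0 := by
    rw [LinearMap.pow_mulRight, hk, LinearMap.mulRight_zero_eq_zero]
  ext m
  simp [IsNilpotent.exp_eq_sum hk, IsNilpotent.exp_eq_sum hk', LinearMap.pow_mulRight,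
    Finset.mul_sum]

theorem IsNilpotent.exp_ad_apply {z : A} (hz : IsNilpotent z) (m : A) :
    IsNilpotent.exp (LieAlgebra.ad ℚ A z) m = IsNilpotent.exp z * m * IsNilpotent.exp (-z) := by
  have hR : LinearMap.mulRight ℚ (-z) = - LinearMap.mulRight ℚ z := by ext; simp
  rw [LieAlgebra.ad_eq_lmul_left_sub_lmul_right, Pi.sub_apply, sub_eq_add_neg, ← hR,
    IsNilpotent.exp_add_of_commute (LinearMap.commute_mulLeft_right _ _)
      ((LinearMap.isNilpotent_mulLeft_iff ℚ _).2 hz)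
      ((LinearMap.isNilpotent_mulRight_iff ℚ _).2 hz.neg),
    hz.exp_mulLeft, hz.neg.exp_mulRight, Module.End.mul_apply,
    LinearMap.mulLeft_apply, LinearMap.mulRight_apply, mul_assoc]

theorem IsNilpotent.exp_ad_of_exp_eq_mul {x y z : A} (hx : IsNilpotent x) (hy : IsNilpotent y)
    (hz : IsNilpotent z) (h : IsNilpotent.exp z = IsNilpotent.exp x * IsNilpotent.exp y) (m : A) :
    IsNilpotent.exp (LieAlgebra.ad ℚ A z) m =
      IsNilpotent.exp (LieAlgebra.ad ℚ A x) (IsNilpotent.exp (LieAlgebra.ad ℚ A y) m) := by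
  have hinv : IsNilpotent.exp (-z) = IsNilpotent.exp (-y) * IsNilpotent.exp (-x) := by
    refine left_inv_eq_right_inv (exp_neg_mul_exp_self hz) ?_
    rw [h, mul_assoc, ← mul_assoc (IsNilpotent.exp y), exp_mul_exp_neg_self hy, one_mul,
      exp_mul_exp_neg_self hx]
  simp only [exp_ad_apply, hx, hy, hz, h, hinv, mul_assoc]

end NilpotentExp

namespace DirectSum

section Projection

variable {ι M σ : Type*} [DecidableEq ι] [AddCommGroup M] [SetLike σ M] [AddSubgroupClass σ M]
  (gr : ι → σ) [Decomposition gr]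

def proj (t : ι) : M →+ M where
  toFun x := decompose gr x t
  map_zero' := by simp
  map_add' x y := by simp [decompose_add]

variable {gr}

@[simp]
theorem proj_apply (t : ι) (x : M) : proj gr t x = decompose gr x t := rfl

theorem proj_mem (t : ι) (x : M) : proj gr t x ∈ gr t := SetLike.coe_mem _

theorem proj_of_mem_same {t : ι} {x : M} (hx : x ∈ gr t) : proj gr t x = x :=
  decompose_of_mem_same gr hx

theorem proj_of_mem_ne {s t : ι} {x : M} (hx : x ∈ gr s) (hst : s ≠ t) : proj gr t x = 0 :=
  decompose_of_mem_ne gr hx hst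

theorem sum_proj [∀ (i) (x : gr i), Decidable (x ≠ 0)] (x : M) :
    ∑ t ∈ (decompose gr x).support, proj gr t x = x :=
  sum_support_decompose gr x

variable [Module ℚ M]

variable (gr) in
def supportedIn (S : Set ι) : Submodule ℚ M where
  carrier := {x | ∀ t ∉ S, proj gr t x = 0}
  add_mem' hx hy t ht := by rw [map_add, hx t ht, hy t ht, add_zero]
  zero_mem' t _ := map_zero _
  smul_mem' q x hx t ht := by rw [map_rat_smul, hx t ht, smul_zero]

theorem mem_supportedIn_of_mem {S : Set ι} {t : ι} {x : M} (hx : x ∈ gr t) (ht : t ∈ S) :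
    x ∈ supportedIn gr S := fun _ hs => proj_of_mem_ne hx (by rintro rfl; exact hs ht)

theorem supportedIn_mono {S T : Set ι} (h : S ⊆ T) : supportedIn gr S ≤ supportedIn gr T :=
  fun _ hx t ht => hx t (fun hs => ht (h hs))

theorem mem_supportedIn_of_mem_iSup {R : Type*} [Ring R] [Module R M] {gr : ι → Submodule R M}
    [Decomposition gr] {p : ι → Prop} {x : M} (hx : x ∈ ⨆ (t : ι) (_ : p t), gr t) :
    x ∈ supportedIn gr {t | p t} := by
  induction hx using Submodule.iSup_induction' with
  | mem t x hx =>
    by_cases ht : p t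
    · rw [iSup_pos ht] at hx
      exact mem_supportedIn_of_mem hx ht
    · rw [iSup_neg ht, Submodule.mem_bot] at hx
      exact hx ▸ zero_mem _
  | zero => exact zero_mem _
  | add x y _ _ hx hy => exact add_mem hx hy

end Projection

section LieGrading

variable {ι L σ : Type*} [LieRing L] [SetLike σ L] [AddSubgroupClass σ L]

def IsLieGrading [Add ι] (gr : ι → σ) : Prop :=
  ∀ s t, ∀ x ∈ gr s, ∀ y ∈ gr t, ⁅x, y⁆ ∈ gr (s + t)

variable [DecidableEq ι] {gr : ι → σ} [Decomposition gr]

theorem proj_lie_of_mem_right [AddRightCancelMonoid ι] (hgr : IsLieGrading gr) {r : ι} {v : L}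
    (hv : v ∈ gr r) (t : ι) (x : L) : proj gr (t + r) ⁅x, v⁆ = ⁅proj gr t x, v⁆ := by
  induction x using Decomposition.inductionOn gr with
  | zero => simp
  | @homogeneous s x =>
    obtain rfl | hst := eq_or_ne s t
    · rw [proj_of_mem_same (hgr _ _ _ x.2 _ hv), proj_of_mem_same x.2]
    · rw [proj_of_mem_ne (hgr _ _ _ x.2 _ hv) (by simpa using hst), proj_of_mem_ne x.2 hst,
        zero_lie]
  | add x y hx hy => rw [add_lie, map_add, hx, hy, map_add, add_lie]

theorem ad_eq_of_forall_mem {R : Type*} [CommRing R] [LieAlgebra R L] {a b : L}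
    (h : ∀ r, ∀ v ∈ gr r, ⁅a, v⁆ = ⁅b, v⁆) : LieAlgebra.ad R L a = LieAlgebra.ad R L b := by
  ext v
  induction v using Decomposition.inductionOn gr with
  | zero => simp
  | homogeneous v => exact h _ v v.2
  | add v w hv hw => simp_all

end LieGrading

section Bigraded

variable {L σ : Type*} [LieRing L] [LieAlgebra ℚ L] [SetLike σ L] [AddSubgroupClass σ L]
  {gr : ℤ × ℤ → σ} [Decomposition gr]

variable (gr) in
abbrev weightLE (w : ℤ) : Submodule ℚ L := supportedIn gr {t | t.1 + t.2 ≤ w}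

-- `supportedIn gr negCone` is the algebra `m⁻¹`.
def negCone : Set (ℤ × ℤ) := {t | t ≠ 0 ∧ t.1 ≤ 0 ∧ t.2 ≤ 0}

theorem proj_eq_zero_of_mem_weightLE {w : ℤ} {x : L} (hx : x ∈ weightLE gr w) {t : ℤ × ℤ}
    (ht : w < t.1 + t.2) : proj gr t x = 0 :=
  hx t (not_le.2 ht)

theorem mem_weightLE_of_mem {t : ℤ × ℤ} {x : L} (hx : x ∈ gr t) : x ∈ weightLE gr (t.1 + t.2) :=
  mem_supportedIn_of_mem hx (le_refl (t.1 + t.2))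

theorem weightLE_mono {w w' : ℤ} (h : w ≤ w') : weightLE gr w ≤ weightLE gr w' :=
  supportedIn_mono fun _ ht => le_trans ht h

theorem supportedIn_negCone_le : supportedIn gr negCone ≤ weightLE gr (-1) :=
  supportedIn_mono fun t ⟨h0, h1, h2⟩ => by
    have : t.1 ≠ 0 ∨ t.2 ≠ 0 := by
      by_contra! h; exact h0 (Prod.ext h.1 h.2)
    show t.1 + t.2 ≤ -1
    omega

theorem lie_mem_weightLE (hgr : IsLieGrading gr) {a b c : ℤ} {x y : L} (hx : x ∈ weightLE gr a)
    (hy : y ∈ weightLE gr b) (hc : a + b ≤ c) : ⁅x, y⁆ ∈ weightLE gr c := by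
  classical
  rw [← sum_proj (gr := gr) x, ← sum_proj (gr := gr) y]
  simp only [sum_lie, lie_sum]
  refine sum_mem fun r _ => sum_mem fun s _ => ?_
  by_cases hs : s.1 + s.2 ≤ a
  · by_cases hr : r.1 + r.2 ≤ b
    · exact mem_supportedIn_of_mem (hgr _ _ _ (proj_mem s x) _ (proj_mem r y))
        (show (s + r).1 + (s + r).2 ≤ c by simp only [Prod.fst_add, Prod.snd_add]; omega)
    · rw [hy r hr, lie_zero]; exact zero_mem _
  · rw [hx s hs, zero_lie]; exact zero_mem _

theorem ad_pow_mem_weightLE (hgr : IsLieGrading gr) {z v : L} (hz : z ∈ weightLE gr (-1)) {w : ℤ}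
    (hv : v ∈ weightLE gr w) (j : ℕ) : (LieAlgebra.ad ℚ L z ^ j) v ∈ weightLE gr (w - j) := by
  induction j with
  | zero => simpa using hv
  | succ j ih =>
    rw [pow_succ', Module.End.mul_apply, LieAlgebra.ad_apply]
    exact lie_mem_weightLE hgr hz ih (by push_cast; omega)

theorem exp_ad_sub_mem_weightLE (hgr : IsLieGrading gr) {z v : L} (hz : z ∈ weightLE gr (-1))
    (hzn : IsNilpotent (LieAlgebra.ad ℚ L z)) {w : ℤ} (hv : v ∈ weightLE gr w) :
    IsNilpotent.exp (LieAlgebra.ad ℚ L z) v - (v + ⁅z, v⁆ + (2⁻¹ : ℚ) • ⁅z, ⁅z, v⁆⁆) ∈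
      weightLE gr (w - 3) := by
  obtain ⟨k, hk⟩ := hzn
  have hexp : IsNilpotent.exp (LieAlgebra.ad ℚ L z) v =
      ∑ i ∈ Finset.range k, ((i + 3).factorial : ℚ)⁻¹ • (LieAlgebra.ad ℚ L z ^ (i + 3)) v +
        (v + ⁅z, v⁆ + (2⁻¹ : ℚ) • ⁅z, ⁅z, v⁆⁆) := by
    rw [IsNilpotent.exp_eq_sum (pow_eq_zero_of_le (Nat.le_add_right k 3) hk), LinearMap.sum_apply,
      Finset.sum_range_succ', Finset.sum_range_succ', Finset.sum_range_succ']
    simp [Nat.factorial, pow_succ, add_assoc]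
    abel
  rw [hexp, add_sub_cancel_right]
  exact sum_mem fun i _ => Submodule.smul_mem _ _ <|
    weightLE_mono (by push_cast; omega) (ad_pow_mem_weightLE hgr hz hv (i + 3))

theorem sub_proj_sub_proj_mem_weightLE {y : L} (hy : y ∈ supportedIn gr negCone) :
    y - proj gr (-1, 0) y - proj gr (0, -1) y ∈ weightLE gr (-2) := by
  intro t ht
  replace ht : -2 < t.1 + t.2 := not_le.1 ht
  rw [map_sub, map_sub]
  by_cases h10 : t = (-1, 0)
  · subst h10
    rw [proj_of_mem_same (proj_mem _ y), proj_of_mem_ne (proj_mem _ y) (by decide), sub_self,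
      sub_zero]
  by_cases h01 : t = (0, -1)
  · subst h01
    rw [proj_of_mem_same (proj_mem _ y), proj_of_mem_ne (proj_mem _ y) (by decide), sub_zero,
      sub_self]
  rw [proj_of_mem_ne (proj_mem _ y) (Ne.symm h10), proj_of_mem_ne (proj_mem _ y) (Ne.symm h01),
    hy t ?_, sub_zero, sub_zero]
  rintro ⟨h0, h1, h2⟩
  obtain ⟨p, q⟩ := t
  simp only [ne_eq, Prod.mk.injEq, Prod.mk_eq_zero] at h0 h10 h01 h1 h2 ht
  omega

theorem exp_ad_exp_ad_sub_mem_weightLE (hgr : IsLieGrading gr) {x y v : L}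
    (hx : x ∈ weightLE gr (-1)) (hy : y ∈ weightLE gr (-1))
    (hxn : IsNilpotent (LieAlgebra.ad ℚ L x)) (hyn : IsNilpotent (LieAlgebra.ad ℚ L y)) {w : ℤ}
    (hv : v ∈ weightLE gr w) :
    IsNilpotent.exp (LieAlgebra.ad ℚ L x) (IsNilpotent.exp (LieAlgebra.ad ℚ L y) v) -
      (v + ⁅x, v⁆ + ⁅y, v⁆ + (2⁻¹ : ℚ) • ⁅x, ⁅x, v⁆⁆ + ⁅x, ⁅y, v⁆⁆ +
        (2⁻¹ : ℚ) • ⁅y, ⁅y, v⁆⁆) ∈ weightLE gr (w - 3) := by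
  set u := IsNilpotent.exp (LieAlgebra.ad ℚ L y) v
  have hu3 := exp_ad_sub_mem_weightLE hgr hy hyn hv
  have hyv : ⁅y, v⁆ ∈ weightLE gr (w - 1) := lie_mem_weightLE hgr hy hv (by omega)
  have hyyv : ⁅y, ⁅y, v⁆⁆ ∈ weightLE gr (w - 2) := lie_mem_weightLE hgr hy hyv (by omega)
  have hu2 : u - v - ⁅y, v⁆ ∈ weightLE gr (w - 2) := by
    convert add_mem (weightLE_mono (by omega) hu3) (Submodule.smul_mem _ (2⁻¹ : ℚ) hyyv) using 1
    abel
  have hu1 : u - v ∈ weightLE gr (w - 1) := by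
    convert add_mem (weightLE_mono (by omega) hu2) hyv using 1
    abel
  have hu : u ∈ weightLE gr w := by
    convert add_mem (weightLE_mono (by omega) hu1) hv using 1
    abel
  have hxu2 : ⁅x, u - v - ⁅y, v⁆⁆ ∈ weightLE gr (w - 3) := lie_mem_weightLE hgr hx hu2 (by omega)
  have hxxu1 : ⁅x, ⁅x, u - v⁆⁆ ∈ weightLE gr (w - 3) :=
    lie_mem_weightLE hgr hx (lie_mem_weightLE hgr hx hu1 le_rfl) (by omega)
  convert add_mem (add_mem (add_mem (exp_ad_sub_mem_weightLE hgr hx hxn hu) hu3) hxu2)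
    (Submodule.smul_mem _ (2⁻¹ : ℚ) hxxu1) using 1
  simp only [lie_sub, smul_sub]
  abel

theorem bch_second_order_mem_weightLE (hgr : IsLieGrading gr) {x y z v : L}
    (hx : x ∈ weightLE gr (-1)) (hy : y ∈ weightLE gr (-1)) (hz : z ∈ weightLE gr (-1))
    (hxn : IsNilpotent (LieAlgebra.ad ℚ L x)) (hyn : IsNilpotent (LieAlgebra.ad ℚ L y))
    (hzn : IsNilpotent (LieAlgebra.ad ℚ L z))
    (h : IsNilpotent.exp (LieAlgebra.ad ℚ L z) v =
      IsNilpotent.exp (LieAlgebra.ad ℚ L x) (IsNilpotent.exp (LieAlgebra.ad ℚ L y) v))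
    {w : ℤ} (hv : v ∈ weightLE gr w) :
    ⁅z, v⁆ + (2⁻¹ : ℚ) • ⁅z, ⁅z, v⁆⁆ - (⁅x, v⁆ + ⁅y, v⁆ + (2⁻¹ : ℚ) • ⁅x, ⁅x, v⁆⁆ +
      ⁅x, ⁅y, v⁆⁆ + (2⁻¹ : ℚ) • ⁅y, ⁅y, v⁆⁆) ∈ weightLE gr (w - 3) := by
  have := sub_mem (exp_ad_exp_ad_sub_mem_weightLE hgr hx hy hxn hyn hv)
    (exp_ad_sub_mem_weightLE hgr hz hzn hv)
  rw [← h] at this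
  convert this using 1
  abel

theorem ad_proj_eq_add_of_exp_ad_eq (hgr : IsLieGrading gr) {x y z : L}
    (hx : x ∈ weightLE gr (-1)) (hy : y ∈ weightLE gr (-1)) (hz : z ∈ weightLE gr (-1))
    (hxn : IsNilpotent (LieAlgebra.ad ℚ L x)) (hyn : IsNilpotent (LieAlgebra.ad ℚ L y))
    (hzn : IsNilpotent (LieAlgebra.ad ℚ L z))
    (h : ∀ v, IsNilpotent.exp (LieAlgebra.ad ℚ L z) v =
      IsNilpotent.exp (LieAlgebra.ad ℚ L x) (IsNilpotent.exp (LieAlgebra.ad ℚ L y) v))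
    {t : ℤ × ℤ} (ht : t.1 + t.2 = -1) :
    LieAlgebra.ad ℚ L (proj gr t z) =
      LieAlgebra.ad ℚ L (proj gr t x) + LieAlgebra.ad ℚ L (proj gr t y) := by
  rw [← map_add, ← map_add]
  refine ad_eq_of_forall_mem (gr := gr) fun r v hv => ?_
  have hv' := mem_weightLE_of_mem hv
  have hlielie : ∀ a ∈ weightLE gr (-1), ∀ b ∈ weightLE gr (-1),
      ⁅a, ⁅b, v⁆⁆ ∈ weightLE gr (r.1 + r.2 - 2) := fun a ha b hb =>
    lie_mem_weightLE hgr ha (lie_mem_weightLE hgr hb hv' le_rfl) (by omega)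
  -- The quadratic terms lie two weights below `v`, out of reach of the component `t + r`.
  have hlin : ⁅z - (x + y), v⁆ ∈ weightLE gr (r.1 + r.2 - 2) := by
    convert sub_mem (weightLE_mono (by omega)
        (bch_second_order_mem_weightLE hgr hx hy hz hxn hyn hzn (h v) hv'))
      (sub_mem (Submodule.smul_mem _ (2⁻¹ : ℚ) (hlielie z hz z hz))
        (add_mem (add_mem (Submodule.smul_mem _ (2⁻¹ : ℚ) (hlielie x hx x hx))
          (hlielie x hx y hy)) (Submodule.smul_mem _ (2⁻¹ : ℚ) (hlielie y hy y hy)))) using 1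
    simp only [sub_lie, add_lie]
    abel
  have := proj_eq_zero_of_mem_weightLE hlin (t := t + r)
    (by simp only [Prod.fst_add, Prod.snd_add]; omega)
  rwa [proj_lie_of_mem_right hgr hv, map_sub, sub_lie, sub_eq_zero] at this

-- Within `negCone`, `(-1, -1)` splits only as `(-1, 0) + (0, -1)`, in either order.
theorem proj_lie_lie_of_mem_negCone (hgr : IsLieGrading gr) {x y : L}
    (hx : x ∈ supportedIn gr negCone) (hy : y ∈ supportedIn gr negCone) {r : ℤ × ℤ} {v : L}
    (hv : v ∈ gr r) :
    proj gr ((-1, -1) + r) ⁅x, ⁅y, v⁆⁆ =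
      ⁅proj gr (0, -1) x, ⁅proj gr (-1, 0) y, v⁆⁆ +
        ⁅proj gr (-1, 0) x, ⁅proj gr (0, -1) y, v⁆⁆ := by
  have hrest : ⁅x, ⁅y - proj gr (-1, 0) y - proj gr (0, -1) y, v⁆⁆ ∈
      weightLE gr (r.1 + r.2 - 3) :=
    lie_mem_weightLE hgr (supportedIn_negCone_le hx)
      (lie_mem_weightLE hgr (sub_proj_sub_proj_mem_weightLE hy) (mem_weightLE_of_mem hv) le_rfl)
      (by omega)
  have hsplit : ⁅x, ⁅y, v⁆⁆ = ⁅x, ⁅proj gr (-1, 0) y, v⁆⁆ + ⁅x, ⁅proj gr (0, -1) y, v⁆⁆ +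
      ⁅x, ⁅y - proj gr (-1, 0) y - proj gr (0, -1) y, v⁆⁆ := by
    simp only [sub_lie, lie_sub]
    abel
  rw [hsplit, map_add, map_add, proj_eq_zero_of_mem_weightLE hrest
    (by simp only [Prod.fst_add, Prod.snd_add]; omega), add_zero]
  congr 1
  · rw [show ((-1, -1) : ℤ × ℤ) + r = (0, -1) + ((-1, 0) + r) by rw [← add_assoc]; rfl]
    exact proj_lie_of_mem_right hgr (hgr _ _ _ (proj_mem _ y) _ hv) _ x
  · rw [show ((-1, -1) : ℤ × ℤ) + r = (-1, 0) + ((0, -1) + r) by rw [← add_assoc]; rfl]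
    exact proj_lie_of_mem_right hgr (hgr _ _ _ (proj_mem _ y) _ hv) _ x

theorem ad_proj_neg_one_neg_one_of_exp_ad_eq (hgr : IsLieGrading gr) {x y z : L}
    (hx : x ∈ supportedIn gr negCone) (hy : y ∈ supportedIn gr negCone)
    (hz : z ∈ supportedIn gr negCone)
    (hxn : IsNilpotent (LieAlgebra.ad ℚ L x)) (hyn : IsNilpotent (LieAlgebra.ad ℚ L y))
    (hzn : IsNilpotent (LieAlgebra.ad ℚ L z))
    (h : ∀ v, IsNilpotent.exp (LieAlgebra.ad ℚ L z) v =
      IsNilpotent.exp (LieAlgebra.ad ℚ L x) (IsNilpotent.exp (LieAlgebra.ad ℚ L y) v)) :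
    LieAlgebra.ad ℚ L (proj gr (-1, -1) z) =
      LieAlgebra.ad ℚ L (proj gr (-1, -1) x + proj gr (-1, -1) y +
        (2⁻¹ : ℚ) • ⁅proj gr (-1, 0) x, proj gr (0, -1) y⁆ +
        (2⁻¹ : ℚ) • ⁅proj gr (0, -1) x, proj gr (-1, 0) y⁆) := by
  have first_order {t : ℤ × ℤ} (ht : t.1 + t.2 = -1) (v : L) :
      ⁅proj gr t z, v⁆ = ⁅proj gr t x, v⁆ + ⁅proj gr t y, v⁆ := by
    simpa using LinearMap.congr_fun (ad_proj_eq_add_of_exp_ad_eq hgr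
      (supportedIn_negCone_le hx) (supportedIn_negCone_le hy) (supportedIn_negCone_le hz)
      hxn hyn hzn h ht) v
  refine ad_eq_of_forall_mem (gr := gr) fun r v hv => ?_
  have := proj_eq_zero_of_mem_weightLE (bch_second_order_mem_weightLE hgr
    (supportedIn_negCone_le hx) (supportedIn_negCone_le hy) (supportedIn_negCone_le hz)
    hxn hyn hzn (h v) (mem_weightLE_of_mem hv)) (t := (-1, -1) + r)
    (by simp only [Prod.fst_add, Prod.snd_add]; omega)
  simp only [map_add, map_sub, map_rat_smul, proj_lie_of_mem_right hgr hv,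
    proj_lie_lie_of_mem_negCone hgr hz hz hv, proj_lie_lie_of_mem_negCone hgr hx hx hv,
    proj_lie_lie_of_mem_negCone hgr hx hy hv, proj_lie_lie_of_mem_negCone hgr hy hy hv,
    first_order (t := (-1, 0)) (by norm_num), first_order (t := (0, -1)) (by norm_num),
    lie_add] at this
  simp only [add_lie, smul_lie, lie_lie]
  linear_combination (norm := module) this

end Bigraded

end DirectSum

section Matrix

open NormedSpace DirectSum

attribute [local instance 100] LieRing.ofAssociativeRing

theorem Matrix.eq_zero_of_isNilpotent_of_forall_commute {n R : Type*} [Fintype n] [DecidableEq n]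
    [CommRing R] [IsReduced R] {d : Matrix n n R} (hd : IsNilpotent d) (hc : ∀ m, Commute d m) :
    d = 0 := by
  obtain ⟨r, rfl⟩ := Matrix.mem_range_scalar_of_commute_single fun i j _ => (hc _).symm
  cases isEmpty_or_nonempty n
  · exact Subsingleton.elim _ _
  · rw [((IsNilpotent.map_iff fun _ _ => Matrix.scalar_inj.1).1 hd).eq_zero, map_zero]

variable {n K : Type*} [Fintype n] [DecidableEq n] [Field K] [CharZero K]

theorem Matrix.eq_of_ad_eq {a b : Matrix n n K} (hab : IsNilpotent (a - b))
    (h : LieAlgebra.ad ℚ _ a = LieAlgebra.ad ℚ _ b) : a = b := by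
  refine sub_eq_zero.1 (Matrix.eq_zero_of_isNilpotent_of_forall_commute hab fun m => ?_)
  rw [commute_iff_lie_eq, sub_lie, ← LieAlgebra.ad_apply ℚ, ← LieAlgebra.ad_apply ℚ, h, sub_self]

variable [TopologicalSpace K] [IsTopologicalRing K] [T2Space K]
  {gr : ℤ × ℤ → Submodule K (Matrix n n K)} [Decomposition gr]

theorem Matrix.proj_of_exp_eq_exp_mul_exp (hgr : IsLieGrading gr)
    (hnil : ∀ d ∈ ⨆ t ∈ negCone, gr t, IsNilpotent d) {x y z : Matrix n n K}
    (hx : x ∈ ⨆ t ∈ negCone, gr t) (hy : y ∈ ⨆ t ∈ negCone, gr t)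
    (hz : z ∈ ⨆ t ∈ negCone, gr t) (h : exp z = exp x * exp y) :
    proj gr (-1, 0) z = proj gr (-1, 0) x + proj gr (-1, 0) y ∧
    proj gr (0, -1) z = proj gr (0, -1) x + proj gr (0, -1) y ∧
    proj gr (-1, -1) z = proj gr (-1, -1) x + proj gr (-1, -1) y +
      (2⁻¹ : K) • ⁅proj gr (-1, 0) x, proj gr (0, -1) y⁆ +
      (2⁻¹ : K) • ⁅proj gr (0, -1) x, proj gr (-1, 0) y⁆ := by
  have hmem {t : ℤ × ℤ} (ht : t ∈ negCone) : gr t ≤ ⨆ t ∈ negCone, gr t := le_biSup gr ht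
  rw [exp_eq_isNilpotent_exp (hnil x hx), exp_eq_isNilpotent_exp (hnil y hy),
    exp_eq_isNilpotent_exp (hnil z hz)] at h
  have hexp := IsNilpotent.exp_ad_of_exp_eq_mul (hnil x hx) (hnil y hy) (hnil z hz) h
  have had := fun {w} (hw : w ∈ ⨆ t ∈ negCone, gr t) =>
    LieAlgebra.ad_nilpotent_of_nilpotent (R := ℚ) (hnil w hw)
  have first_order {t : ℤ × ℤ} (ht : t ∈ negCone) (hw : t.1 + t.2 = -1) :
      proj gr t z = proj gr t x + proj gr t y := by
    refine Matrix.eq_of_ad_eq (hnil _ (hmem ht (sub_mem (proj_mem t z)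
      (add_mem (proj_mem t x) (proj_mem t y))))) ?_
    rw [map_add]
    exact ad_proj_eq_add_of_exp_ad_eq hgr
      (supportedIn_negCone_le (mem_supportedIn_of_mem_iSup hx))
      (supportedIn_negCone_le (mem_supportedIn_of_mem_iSup hy))
      (supportedIn_negCone_le (mem_supportedIn_of_mem_iSup hz)) (had hx) (had hy) (had hz)
      hexp hw
  refine ⟨first_order (by norm_num [negCone]) (by norm_num),
    first_order (by norm_num [negCone]) (by norm_num), ?_⟩
  have hbr {s t : ℤ × ℤ} (hst : s + t = (-1, -1)) (a b : Matrix n n K) :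
      ⁅proj gr s a, proj gr t b⁆ ∈ gr (-1, -1) :=
    hst ▸ hgr _ _ _ (proj_mem s a) _ (proj_mem t b)
  refine Matrix.eq_of_ad_eq (hnil _ (hmem (by norm_num [negCone]) (sub_mem (proj_mem _ z)
    (add_mem (add_mem (add_mem (proj_mem _ x) (proj_mem _ y))
      (Submodule.smul_mem _ _ (hbr (by norm_num) x y)))
      (Submodule.smul_mem _ _ (hbr (by norm_num) x y)))))) ?_
  rw [show (2⁻¹ : K) = ((2⁻¹ : ℚ) : K) by push_cast; rfl, Rat.cast_smul_eq_qsmul,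
    Rat.cast_smul_eq_qsmul]
  exact ad_proj_neg_one_neg_one_of_exp_ad_eq hgr (mem_supportedIn_of_mem_iSup hx)
    (mem_supportedIn_of_mem_iSup hy) (mem_supportedIn_of_mem_iSup hz) (had hx) (had hy) (had hz)
    hexp

theorem Matrix.proj_of_exp_eq_exp_mul_exp_of_mem_iSup (hgr : IsLieGrading gr)
    (hnil : ∀ d ∈ ⨆ t ∈ negCone, gr t, IsNilpotent d) {x y z : Matrix n n K}
    (hx : x ∈ ⨆ (t : ℤ × ℤ) (_ : t.1 < 0 ∧ t.2 ≤ 0), gr t)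
    (hy : y ∈ ⨆ (t : ℤ × ℤ) (_ : t.1 = 0 ∧ t.2 < 0), gr t)
    (hz : z ∈ ⨆ t ∈ negCone, gr t) (h : exp z = exp x * exp y) :
    proj gr (-1, 0) z = proj gr (-1, 0) x ∧ proj gr (0, -1) z = proj gr (0, -1) y ∧
    proj gr (-1, -1) z =
      proj gr (-1, -1) x + (2⁻¹ : K) • ⁅proj gr (-1, 0) x, proj gr (0, -1) y⁆ := by
  have hA : (⨆ (t : ℤ × ℤ) (_ : t.1 < 0 ∧ t.2 ≤ 0), gr t) ≤ ⨆ t ∈ negCone, gr t :=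
    biSup_mono fun t ht => ⟨fun h => by simp [h] at ht, ht.1.le, ht.2⟩
  have hB : (⨆ (t : ℤ × ℤ) (_ : t.1 = 0 ∧ t.2 < 0), gr t) ≤ ⨆ t ∈ negCone, gr t :=
    biSup_mono fun t ht => ⟨fun h => by simp [h] at ht, ht.1.le, ht.2.le⟩
  have hx0 : proj gr (0, -1) x = 0 := mem_supportedIn_of_mem_iSup hx _ (by norm_num)
  have hy0 {t : ℤ × ℤ} (ht : t.1 ≠ 0) : proj gr t y = 0 :=
    mem_supportedIn_of_mem_iSup hy t fun h => ht h.1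
  obtain ⟨h10, h01, h11⟩ := Matrix.proj_of_exp_eq_exp_mul_exp hgr hnil (hA hx) (hB hy) hz h
  rw [hy0 (by norm_num), add_zero] at h10
  rw [hx0, zero_add] at h01
  rw [hy0 (by norm_num), hx0, zero_lie, smul_zero, add_zero, add_zero] at h11
  exact ⟨h10, h01, h11⟩

end Matrix

open NormedSpace DirectSum in
/-- For `γᵢ = exp cᵢ = exp aᵢ · exp bᵢ` (i = 1,2) in the unipotent group of a
bigraded nilpotent Lie algebra `m⁻¹` (with `aᵢ ∈ m ∩ f^⊥`, `bᵢ ∈ m⁻¹ ∩ f`), and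
`γ = γ₁γ₂ = exp c = exp a · exp b` factored likewise, the bigraded components satisfy:
`a^{-1,0} = a₁^{-1,0} + a₂^{-1,0}`; `b^{0,-1} = b₁^{0,-1} + b₂^{0,-1}`;
`c^{-1,-1} = c₁^{-1,-1} + c₂^{-1,-1} + ½[a₁^{-1,0}, b₂^{0,-1}] + ½[b₁^{0,-1}, a₂^{-1,0}]`;
`a^{-1,-1} = a₁^{-1,-1} + a₂^{-1,-1} + [b₁^{0,-1}, a₂^{-1,0}]`. -/
theorem stmt10
    (k : ℕ)
    (gr : ℤ × ℤ → Submodule ℂ (Matrix (Fin k) (Fin k) ℂ))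
    [DirectSum.Decomposition gr]
    (hbracket : ∀ pq rs : ℤ × ℤ, ∀ x ∈ gr pq, ∀ y ∈ gr rs, ⁅x, y⁆ ∈ gr (pq + rs))
    (mminus : Submodule ℂ (Matrix (Fin k) (Fin k) ℂ))
    (hmminus : mminus =
      ⨆ (pq : ℤ × ℤ) (_ : pq ≠ 0 ∧ pq.1 ≤ 0 ∧ pq.2 ≤ 0), gr pq)
    (hnil : ∃ n : ℕ, ∀ x ∈ mminus, x ^ n = 0)
    (a₁ b₁ c₁ a₂ b₂ c₂ a b c : Matrix (Fin k) (Fin k) ℂ)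
    (ha₁ : a₁ ∈ ⨆ (pq : ℤ × ℤ) (_ : pq.1 < 0 ∧ pq.2 ≤ 0), gr pq)
    (ha₂ : a₂ ∈ ⨆ (pq : ℤ × ℤ) (_ : pq.1 < 0 ∧ pq.2 ≤ 0), gr pq)
    (ha : a ∈ ⨆ (pq : ℤ × ℤ) (_ : pq.1 < 0 ∧ pq.2 ≤ 0), gr pq)
    (hb₁ : b₁ ∈ ⨆ (pq : ℤ × ℤ) (_ : pq.1 = 0 ∧ pq.2 < 0), gr pq)
    (hb₂ : b₂ ∈ ⨆ (pq : ℤ × ℤ) (_ : pq.1 = 0 ∧ pq.2 < 0), gr pq)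
    (hb : b ∈ ⨆ (pq : ℤ × ℤ) (_ : pq.1 = 0 ∧ pq.2 < 0), gr pq)
    (hc₁ : c₁ ∈ mminus) (hc₂ : c₂ ∈ mminus) (hc : c ∈ mminus)
    (hfac₁ : exp c₁ = exp a₁ * exp b₁)
    (hfac₂ : exp c₂ = exp a₂ * exp b₂)
    (hprod : exp c = exp c₁ * exp c₂)
    (hfac : exp c = exp a * exp b) :
    ((decompose gr a (-1, 0) : Matrix (Fin k) (Fin k) ℂ) =
      (decompose gr a₁ (-1, 0) : Matrix (Fin k) (Fin k) ℂ) + decompose gr a₂ (-1, 0)) ∧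
    ((decompose gr b (0, -1) : Matrix (Fin k) (Fin k) ℂ) =
      (decompose gr b₁ (0, -1) : Matrix (Fin k) (Fin k) ℂ) + decompose gr b₂ (0, -1)) ∧
    ((decompose gr c (-1, -1) : Matrix (Fin k) (Fin k) ℂ) =
      (decompose gr c₁ (-1, -1) : Matrix (Fin k) (Fin k) ℂ) + decompose gr c₂ (-1, -1) +
        (2⁻¹ : ℂ) • ⁅(decompose gr a₁ (-1, 0) : Matrix (Fin k) (Fin k) ℂ),
            (decompose gr b₂ (0, -1) : Matrix (Fin k) (Fin k) ℂ)⁆ +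
        (2⁻¹ : ℂ) • ⁅(decompose gr b₁ (0, -1) : Matrix (Fin k) (Fin k) ℂ),
            (decompose gr a₂ (-1, 0) : Matrix (Fin k) (Fin k) ℂ)⁆) ∧
    ((decompose gr a (-1, -1) : Matrix (Fin k) (Fin k) ℂ) =
      (decompose gr a₁ (-1, -1) : Matrix (Fin k) (Fin k) ℂ) + decompose gr a₂ (-1, -1) +
        ⁅(decompose gr b₁ (0, -1) : Matrix (Fin k) (Fin k) ℂ),
          (decompose gr a₂ (-1, 0) : Matrix (Fin k) (Fin k) ℂ)⁆) := by
  let : LieRing (Matrix (Fin k) (Fin k) ℂ) := LieRing.ofAssociativeRing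
  subst hmminus
  obtain ⟨N, hN⟩ := hnil
  have hnil : ∀ d ∈ ⨆ t ∈ negCone, gr t, IsNilpotent d := fun d hd => ⟨N, hN d hd⟩
  obtain ⟨h10, h01, h11⟩ :=
    Matrix.proj_of_exp_eq_exp_mul_exp_of_mem_iSup hbracket hnil ha hb hc hfac
  obtain ⟨h10₁, h01₁, h11₁⟩ :=
    Matrix.proj_of_exp_eq_exp_mul_exp_of_mem_iSup hbracket hnil ha₁ hb₁ hc₁ hfac₁
  obtain ⟨h10₂, h01₂, h11₂⟩ :=
    Matrix.proj_of_exp_eq_exp_mul_exp_of_mem_iSup hbracket hnil ha₂ hb₂ hc₂ hfac₂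
  obtain ⟨p10, p01, p11⟩ := Matrix.proj_of_exp_eq_exp_mul_exp hbracket hnil hc₁ hc₂ hc hprod
  simp only [← proj_apply]
  have ha10 : proj gr (-1, 0) a = proj gr (-1, 0) a₁ + proj gr (-1, 0) a₂ := by
    rw [← h10, p10, h10₁, h10₂]
  have hb01 : proj gr (0, -1) b = proj gr (0, -1) b₁ + proj gr (0, -1) b₂ := by
    rw [← h01, p01, h01₁, h01₂]
  rw [h10₁, h01₂, h01₁, h10₂] at p11
  refine ⟨ha10, hb01, p11, ?_⟩
  rw [eq_sub_of_add_eq h11.symm, p11, h11₁, h11₂, ha10, hb01]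
  simp only [lie_add, add_lie]
  rw [← lie_skew (proj gr (0, -1) b₁)]
  module
end

section
/- Let W¹ and W² be two weight filtrations of nilpotent cones on a Lie algebra g, split by a commuting pair of semisimple grading elements (Y, Ŷ) with integral joint eigenspace decomposition g = ⊕ g_{a,b}, such that W¹_ℓ(g) = ⊕_{a≤ℓ} g_{a,b} and W²_ℓ(g) = ⊕_{a+b≤ℓ} g_{a,b}. Suppose c ⊂ g is a subalgebra with c ⊂ W²_0(g) and c ⊂ W¹_0(g), and suppose there is N̂ ∈ g_{0,-2} with centralizer satisfying c(N̂) ⊂ ⊕_{b≤0} g_{a,b}, and an element N ∈ c-centralized nilpotent of the form N = Σ_{a≤0} N_a with N_a ∈ g_{a,-a-2}, N_0 = N̂. Then for every X ∈ c with [N, X] = 0: if X ∈ W¹_ℓ(c) for some ℓ < 0, then X ∈ W²_ℓ(c). In particular W¹_ℓ(c) ⊂ W²_ℓ(c) for all ℓ. -/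
/-!
Write `X = Σ X_{a,b}` for the bigrading. If some component of total weight `a + b > ℓ` were
nonzero, take one with `a` maximal. The `(a, b - 2)` component of `[N, X] = 0` is
`[N̂, X_{a,b}]` plus brackets `[N_{a'}, X_{a-a', b+a'}]` with `a' < 0`; those components have
the same total weight and a larger first index, so they vanish. Hence `X_{a,b}` centralizes
`N̂`, which forces `b ≤ 0`, i.e. `a > ℓ`, contradicting `X ∈ W¹_ℓ`.
-/

open DirectSum

theorem Submodule.biSup_induction {ι R M : Type*} [Semiring R] [AddCommMonoid M] [Module R M]
    {p : ι → Submodule R M} {P : ι → Prop} {motive : M → Prop} {x : M}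
    (hx : x ∈ ⨆ (i) (_ : P i), p i) (mem : ∀ i, P i → ∀ x ∈ p i, motive x) (zero : motive 0)
    (add : ∀ x y, motive x → motive y → motive (x + y)) : motive x := by
  rw [iSup_subtype'] at hx
  exact Submodule.iSup_induction _ (motive := motive) hx (fun i => mem i i.2) zero add

namespace DirectSum

section Decomposition

variable {ι R M : Type*} [DecidableEq ι] [Semiring R] [AddCommMonoid M] [Module R M]
  (ℳ : ι → Submodule R M) [Decomposition ℳ]

theorem mem_iSup_iff_decompose_eq_zero (P : ι → Prop) {x : M} :
    x ∈ ⨆ (i) (_ : P i), ℳ i ↔ ∀ i, ¬P i → (decompose ℳ x i : M) = 0 := by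
  classical
  constructor
  · intro hx j hj
    refine Submodule.biSup_induction (motive := fun y => (decompose ℳ y j : M) = 0) hx
      (fun i hi y hy => decompose_of_mem_ne ℳ hy fun hij => hj (hij ▸ hi)) (by simp)
      (fun y z hy hz => by simp [hy, hz])
  · intro h
    rw [← sum_support_decompose ℳ x]
    refine Submodule.sum_mem _ fun i hi => ?_
    have hPi : P i := by_contra fun hPi => DFinsupp.mem_support_iff.mp hi (Subtype.ext (h i hPi))
    exact Submodule.mem_iSup_of_mem i (Submodule.mem_iSup_of_mem hPi (Submodule.coe_mem _))

theorem eq_zero_of_mem_of_mem_iSup {P : ι → Prop} {i : ι} {x : M} (hx : x ∈ ℳ i)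
    (hxP : x ∈ ⨆ (j) (_ : P j), ℳ j) (hi : ¬P i) : x = 0 := by
  rw [← decompose_of_mem_same ℳ hx]
  exact (mem_iSup_iff_decompose_eq_zero ℳ P).mp hxP i hi

end Decomposition

theorem coe_decompose_lie_of_left_mem {ι σ L : Type*} [DecidableEq ι] [Add ι] [IsLeftCancelAdd ι]
    [LieRing L] [SetLike σ L] [AddSubmonoidClass σ L] (ℒ : ι → σ) [Decomposition ℒ]
    [SetLike.GradedBracket ℒ] {p : ι} {x : L} (hx : x ∈ ℒ p) (y : L) (i : ι) :
    (decompose ℒ ⁅x, y⁆ (p + i) : L) = ⁅x, (decompose ℒ y i : L)⁆ := by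
  induction y using Decomposition.inductionOn ℒ with
  | zero => simp
  | @homogeneous j y =>
    have hxy := SetLike.GradedBracket.bracket_mem hx y.2
    by_cases hji : j = i
    · subst hji
      rw [decompose_of_mem_same ℒ hxy, decompose_of_mem_same ℒ y.2]
    · rw [decompose_of_mem_ne ℒ hxy (by simpa using hji), decompose_of_mem_ne ℒ y.2 hji, lie_zero]
  | add y z hy hz => simp [lie_add, hy, hz]

end DirectSum

section Bigraded

variable {R L : Type*} [CommRing R] [LieRing L] [LieAlgebra R L]
  (ℒ : ℤ × ℤ → Submodule R L) [Decomposition ℒ] [SetLike.GradedBracket ℒ]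
  {Nhat N X : L}

theorem lie_coe_decompose_eq_zero_of_lie_eq_zero (hNhat : Nhat ∈ ℒ (0, -2))
    (hN : N - Nhat ∈ ⨆ (c : ℤ × ℤ) (_ : c.1 < 0 ∧ c.2 = -c.1 - 2), ℒ c) (hNX : ⁅N, X⁆ = 0)
    {a b : ℤ} (hX : ∀ a' b', a < a' → a' + b' = a + b → (decompose ℒ X (a', b') : L) = 0) :
    ⁅Nhat, (decompose ℒ X (a, b) : L)⁆ = 0 := by
  have hlower : (decompose ℒ ⁅N - Nhat, X⁆ (a, b - 2) : L) = 0 := by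
    refine Submodule.biSup_induction
      (motive := fun y => (decompose ℒ ⁅y, X⁆ (a, b - 2) : L) = 0) hN ?_ (by simp) ?_
    · rintro ⟨a', b'⟩ ⟨ha', hb'⟩ y hy
      simp only at ha' hb'
      subst hb'
      have h := coe_decompose_lie_of_left_mem ℒ hy X (a - a', b + a')
      rw [show ((a', -a' - 2) + (a - a', b + a') : ℤ × ℤ) = (a, b - 2) by ext <;> simp; ring] at h
      rw [h, hX _ _ (by omega) (by omega), lie_zero]
    · intro y z hy hz
      simp [add_lie, hy, hz]
  have hNhat' := coe_decompose_lie_of_left_mem ℒ hNhat X (a, b)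
  rw [show ((0, -2) + (a, b) : ℤ × ℤ) = (a, b - 2) by ext <;> simp; ring] at hNhat'
  have hsplit : ⁅N, X⁆ = ⁅Nhat, X⁆ + ⁅N - Nhat, X⁆ := by rw [← add_lie, add_sub_cancel]
  have := congrArg (fun y => (decompose ℒ y (a, b - 2) : L)) hsplit
  simpa only [hNX, decompose_add, DirectSum.add_apply, Submodule.coe_add, hNhat', hlower, add_zero,
    decompose_zero, DirectSum.zero_apply, ZeroMemClass.coe_zero] using this.symm

theorem coe_decompose_eq_zero_of_lie_eq_zero (hNhat : Nhat ∈ ℒ (0, -2))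
    (hcent : ∀ x : L, ⁅Nhat, x⁆ = 0 → x ∈ ⨆ (c : ℤ × ℤ) (_ : c.2 ≤ 0), ℒ c)
    (hN : N - Nhat ∈ ⨆ (c : ℤ × ℤ) (_ : c.1 < 0 ∧ c.2 = -c.1 - 2), ℒ c) (hNX : ⁅N, X⁆ = 0)
    {ℓ : ℤ} (hX : ∀ c : ℤ × ℤ, ℓ < c.1 → (decompose ℒ X c : L) = 0) :
    ∀ c : ℤ × ℤ, ℓ < c.1 + c.2 → (decompose ℒ X c : L) = 0 := by
  classical
  by_contra! hbad
  -- Among the components of `X` of total weight `> ℓ`, take one with maximal first index.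
  obtain ⟨⟨a, b⟩, hab, hmax⟩ := ((decompose ℒ X).support.filter
    (fun c => ℓ < c.1 + c.2)).exists_max_image Prod.fst (by
      obtain ⟨c, hc, hne⟩ := hbad
      exact ⟨c, Finset.mem_filter.mpr ⟨DFinsupp.mem_support_iff.mpr fun h => hne (by simp [h]), hc⟩⟩)
  rw [Finset.mem_filter, DFinsupp.mem_support_iff] at hab
  have hne : (decompose ℒ X (a, b) : L) ≠ 0 := fun h => hab.1 (Subtype.ext h)
  have hcomm : ⁅Nhat, (decompose ℒ X (a, b) : L)⁆ = 0 := by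
    refine lie_coe_decompose_eq_zero_of_lie_eq_zero ℒ hNhat hN hNX fun a' b' ha' hsum => ?_
    by_contra h
    have := hmax (a', b') (Finset.mem_filter.mpr
      ⟨DFinsupp.mem_support_iff.mpr fun h' => h (by simp [h']), by simpa [hsum] using hab.2⟩)
    exact absurd ha' (not_lt.mpr this)
  have hb : b ≤ 0 := by
    by_contra hb
    exact hne (eq_zero_of_mem_of_mem_iSup ℒ (Submodule.coe_mem _) (hcent _ hcomm) hb)
  exact hne (hX (a, b) (by simp only at hab ⊢; omega))

end Bigraded

theorem stmt13_general
    (L : Type*) [LieRing L] [LieAlgebra ℂ L]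
    (g : ℤ → ℤ → Submodule ℂ L)
    (hinternal : DirectSum.IsInternal (fun ab : ℤ × ℤ => g ab.1 ab.2))
    (hbracket : ∀ a b a' b' : ℤ, ∀ x ∈ g a b, ∀ y ∈ g a' b',
      ⁅x, y⁆ ∈ g (a + a') (b + b'))
    (W1 W2 : ℤ → Submodule ℂ L)
    (hW1 : ∀ ℓ : ℤ, W1 ℓ = ⨆ (ab : ℤ × ℤ) (_ : ab.1 ≤ ℓ), g ab.1 ab.2)
    (hW2 : ∀ ℓ : ℤ, W2 ℓ = ⨆ (ab : ℤ × ℤ) (_ : ab.1 + ab.2 ≤ ℓ), g ab.1 ab.2)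
    (c : Submodule ℂ L)
    (Nhat : L) (hNhat : Nhat ∈ g 0 (-2))
    (hcent : ∀ x : L, ⁅Nhat, x⁆ = 0 →
      x ∈ ⨆ (ab : ℤ × ℤ) (_ : ab.2 ≤ 0), g ab.1 ab.2)
    (N : L)
    (hN : N - Nhat ∈ ⨆ (ab : ℤ × ℤ) (_ : ab.1 < 0 ∧ ab.2 = -ab.1 - 2), g ab.1 ab.2) :
    ∀ X ∈ c, ⁅N, X⁆ = 0 → ∀ ℓ : ℤ, X ∈ W1 ℓ → X ∈ W2 ℓ := by
  let ℒ : ℤ × ℤ → Submodule ℂ L := fun ab => g ab.1 ab.2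
  let _ : Decomposition ℒ := hinternal.chooseDecomposition
  have _ : SetLike.GradedBracket ℒ := ⟨fun _ _ _ _ hx hy => hbracket _ _ _ _ _ hx _ hy⟩
  intro X _ hNX ℓ hX
  rw [hW1, mem_iSup_iff_decompose_eq_zero ℒ] at hX
  rw [hW2, mem_iSup_iff_decompose_eq_zero ℒ]
  simpa only [not_le] using
    coe_decompose_eq_zero_of_lie_eq_zero ℒ hNhat hcent hN hNX fun c hc => hX c (not_le.mpr hc)

/-- Let `g = ⊕ g_{a,b}` be the joint integral eigenspace decomposition of a
commuting pair of grading elements splitting two weight filtrations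
`W¹_ℓ = ⊕_{a≤ℓ} g_{a,b}` and `W²_ℓ = ⊕_{a+b≤ℓ} g_{a,b}`.  Let `c ⊆ W¹_0 ∩ W²_0` be a
subalgebra, `N̂ ∈ g_{0,-2}` with centralizer contained in `⊕_{b≤0} g_{a,b}`, and
`N = N̂ + Σ_{a<0} N_a` with `N_a ∈ g_{a,-a-2}`.  Then every `X ∈ c` with `[N, X] = 0`
satisfies: `X ∈ W¹_ℓ → X ∈ W²_ℓ` for every `ℓ`. -/
theorem stmt13
    (L : Type*) [LieRing L] [LieAlgebra ℂ L] [FiniteDimensional ℂ L]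
    (g : ℤ → ℤ → Submodule ℂ L)
    (hinternal : DirectSum.IsInternal (fun ab : ℤ × ℤ => g ab.1 ab.2))
    (hbracket : ∀ a b a' b' : ℤ, ∀ x ∈ g a b, ∀ y ∈ g a' b',
      ⁅x, y⁆ ∈ g (a + a') (b + b'))
    (W1 W2 : ℤ → Submodule ℂ L)
    (hW1 : ∀ ℓ : ℤ, W1 ℓ = ⨆ (ab : ℤ × ℤ) (_ : ab.1 ≤ ℓ), g ab.1 ab.2)
    (hW2 : ∀ ℓ : ℤ, W2 ℓ = ⨆ (ab : ℤ × ℤ) (_ : ab.1 + ab.2 ≤ ℓ), g ab.1 ab.2)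
    (c : Submodule ℂ L)
    (hc_sub : ∀ x y, x ∈ c → y ∈ c → ⁅x, y⁆ ∈ c)
    (hcW1 : c ≤ W1 0) (hcW2 : c ≤ W2 0)
    (Nhat : L) (hNhat : Nhat ∈ g 0 (-2))
    (hcent : ∀ x : L, ⁅Nhat, x⁆ = 0 →
      x ∈ ⨆ (ab : ℤ × ℤ) (_ : ab.2 ≤ 0), g ab.1 ab.2)
    (N : L)
    (hN : N - Nhat ∈ ⨆ (ab : ℤ × ℤ) (_ : ab.1 < 0 ∧ ab.2 = -ab.1 - 2), g ab.1 ab.2) :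
    ∀ X ∈ c, ⁅N, X⁆ = 0 → ∀ ℓ : ℤ, X ∈ W1 ℓ → X ∈ W2 ℓ :=
  stmt13_general L g hinternal hbracket W1 W2 hW1 hW2 c Nhat hNhat hcent N hN
end
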